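/- Let a ∈ ℝ with −1 < a < 0. Then (15 − 8a + a²)/(a·(a+1)) < 0, and the unique real number c with c³ = (15 − 8a + a²)/(a·(a+1)) satisfies c < 0, the derivative of R_a at c is 0 (c is a free critical point of R_a), and the corresponding critical value is positive: R_a(c) > 0. -/

import Mathlib

/-- The real restriction of the rational map `R_a` to the real line. -/
noncomputable def RaR (a x : ℝ) : ℝ :=
  (2*a*x^6 + (15 - a)*x^3 + (3 - a)) / (3*x^2*(5 - a + (1 + a)*x^3))

/-!
The numerator of `R_a'` factors as `6x(x³ - 1)²(a(a+1)x³ - (15 - 8a + a²))`, so the real cube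
root `c` of `(15 - 8a + a²)/(a(a+1))` is a critical point. For the sign of `R_a(c)`, eliminate
`c³` with `a(a+1)c³ = 15 - 8a + a²`: then `a(5 - a + (1+a)c³) = 15 - 3a` and
`(a(a+1))²(2ac⁶ + (15-a)c³ + 3 - a) = 9a(75 - 43a + 9a² - a³)`, so for `-1 < a < 0` numerator
and denominator of `R_a(c)` are both negative.
-/

theorem hasDerivAt_RaR {a x : ℝ} (hx : 3*x^2*(5 - a + (1 + a)*x^3) ≠ 0) :
    HasDerivAt (RaR a)
      (6*x*(x^3 - 1)^2*(a*(a+1)*x^3 - (15 - 8*a + a^2)) / (3*x^2*(5 - a + (1 + a)*x^3))^2) x := by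
  have hN : HasDerivAt (fun x : ℝ => 2*a*x^6 + (15 - a)*x^3 + (3 - a))
      (2*a*(6*x^5) + (15 - a)*(3*x^2)) x := by
    exact (((hasDerivAt_pow 6 x).const_mul (2*a)).add
      ((hasDerivAt_pow 3 x).const_mul (15 - a))).add_const (3 - a) |>.congr_deriv (by norm_num)
  have hD : HasDerivAt (fun x : ℝ => 3*x^2*(5 - a + (1 + a)*x^3))
      (3*(2*x)*(5 - a + (1 + a)*x^3) + 3*x^2*((1 + a)*(3*x^2))) x := by
    exact ((hasDerivAt_pow 2 x).const_mul 3).mul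
      (((hasDerivAt_pow 3 x).const_mul (1 + a)).const_add (5 - a)) |>.congr_deriv (by norm_num)
  exact (hN.div hD hx).congr_deriv (by ring)

theorem deriv_RaR_eq_zero_of_mul_cube_eq {a c : ℝ} (hc : a*(a+1)*c^3 = 15 - 8*a + a^2)
    (hD : 3*c^2*(5 - a + (1 + a)*c^3) ≠ 0) : deriv (RaR a) c = 0 := by
  rw [(hasDerivAt_RaR hD).deriv, hc, sub_self, mul_zero, zero_div]

theorem neg_of_mul_cube_eq {a c : ℝ} (ha1 : -1 < a) (ha0 : a < 0)
    (hc : a*(a+1)*c^3 = 15 - 8*a + a^2) : c < 0 := by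
  have hu : a*(a+1) < 0 := mul_neg_of_neg_of_pos ha0 (by linarith)
  have hc3 : c^3 < 0 := neg_of_mul_pos_right (by nlinarith) hu.le
  exact Odd.pow_neg_iff (by decide) |>.mp hc3

theorem RaR_denom_neg_of_mul_cube_eq {a c : ℝ} (ha1 : -1 < a) (ha0 : a < 0)
    (hc : a*(a+1)*c^3 = 15 - 8*a + a^2) : 3*c^2*(5 - a + (1 + a)*c^3) < 0 := by
  have hfactor : a*(5 - a + (1 + a)*c^3) = 15 - 3*a := by linear_combination hc
  have hc0 : c ≠ 0 := (neg_of_mul_cube_eq ha1 ha0 hc).ne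
  exact mul_neg_of_pos_of_neg (by positivity) (neg_of_mul_pos_right (by linarith) ha0.le)

theorem RaR_numer_neg_of_mul_cube_eq {a c : ℝ} (ha1 : -1 < a) (ha0 : a < 0)
    (hc : a*(a+1)*c^3 = 15 - 8*a + a^2) : 2*a*c^6 + (15 - a)*c^3 + (3 - a) < 0 := by
  have hid : (a*(a+1))^2 * (2*a*c^6 + (15 - a)*c^3 + (3 - a))
      = 9*a*(75 - 43*a + 9*a^2 - a^3) := by
    linear_combination (2*a*(a*(a+1)*c^3 + (15 - 8*a + a^2)) + (15 - a)*(a*(a+1))) * hc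
  have hcubic : 0 < 75 - 43*a + 9*a^2 - a^3 := by
    nlinarith [pow_two_nonneg a, mul_pos_of_neg_of_neg ha0 ha0]
  refine neg_of_mul_neg_right (a := (a*(a+1))^2) ?_ (sq_nonneg _)
  rw [hid]
  nlinarith

/-- For real `a ∈ (-1,0)`: `(15-8a+a²)/(a(a+1)) < 0`, and the (unique) real cube root `c`
of this quantity is negative, is a free critical point of `R_a` (`R_a'(c) = 0`), and its
critical value is positive (`R_a(c) > 0`). -/
theorem stmt_18 (a : ℝ) (ha1 : -1 < a) (ha0 : a < 0) :
    (15 - 8*a + a^2)/(a*(a+1)) < 0 ∧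
    ∀ c : ℝ, c^3 = (15 - 8*a + a^2)/(a*(a+1)) →
      c < 0 ∧ deriv (RaR a) c = 0 ∧ 0 < RaR a c := by
  have hu : a*(a+1) < 0 := mul_neg_of_neg_of_pos ha0 (by linarith)
  refine ⟨div_neg_of_pos_of_neg (by nlinarith) hu, fun c hc => ?_⟩
  have hcube : a*(a+1)*c^3 = 15 - 8*a + a^2 := by rw [hc, mul_div_cancel₀ _ hu.ne]
  have hD := RaR_denom_neg_of_mul_cube_eq ha1 ha0 hcube
  exact ⟨neg_of_mul_cube_eq ha1 ha0 hcube, deriv_RaR_eq_zero_of_mul_cube_eq hcube hD.ne,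
    div_pos_of_neg_of_neg (RaR_numer_neg_of_mul_cube_eq ha1 ha0 hcube) hD⟩
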